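/- arXiv:1810.08671 — 4 statements merged into one kernel-verified Lean document; each statement's English description precedes it below -/
import Mathlib

section
/- Let m, n, p be natural numbers with p ≥ m and p ≥ n. Then the number of pairs of integers (i,j) with |i| ≤ m, |j| ≤ n, and |i+j| ≤ p is at least (3/4)·(2m+1)·(2n+1). -/
/-!
A pair `(i, j)` of the box `[-m, m] × [-n, n]` is lost only if `i + j > p` or `i + j < -p`.
Writing `i = m - a`, `j = n - b`, the first condition says `a + b < m + n - p`, so the lost pairs
on each side fill a corner triangle with `s (s + 1) / 2` points, where `s = m + n - p ≤ min m n`.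
Hence at most `s (s + 1) ≤ ((2m + 1)(2n + 1)) / 4` pairs are lost.
-/

open Finset

def cornerTriangle (s : ℕ) : Finset (ℕ × ℕ) :=
  (range s).biUnion antidiagonal

lemma mem_cornerTriangle {s : ℕ} {x : ℕ × ℕ} : x ∈ cornerTriangle s ↔ x.1 + x.2 < s := by
  simp [cornerTriangle]

lemma two_mul_card_cornerTriangle (s : ℕ) : 2 * #(cornerTriangle s) = s * (s + 1) := by
  have hdisj : (range s : Set ℕ).PairwiseDisjoint antidiagonal := by
    intro k _ l _ hkl
    refine disjoint_left.mpr fun x hk hl => hkl ?_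
    rw [HasAntidiagonal.mem_antidiagonal] at hk hl
    exact hk.symm.trans hl
  rw [cornerTriangle, card_biUnion hdisj]
  have hgauss := sum_range_id_mul_two (s + 1)
  rw [sum_range_succ'] at hgauss
  simp only [Nat.card_antidiagonal, add_zero, Nat.add_sub_cancel] at hgauss ⊢
  linarith

section Box

variable (m n p : ℕ)

lemma card_filter_lt_add_le_card_cornerTriangle :
    #{x ∈ Icc (-(m : ℤ)) m ×ˢ Icc (-(n : ℤ)) n | (p : ℤ) < x.1 + x.2}
      ≤ #(cornerTriangle (m + n - p)) := by
  let corner : ℕ × ℕ → ℤ × ℤ := fun ab => ((m : ℤ) - ab.1, (n : ℤ) - ab.2)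
  calc _ ≤ #((cornerTriangle (m + n - p)).image corner) := by
        refine card_le_card fun x hx => ?_
        simp only [mem_filter, mem_product, mem_Icc] at hx
        refine mem_image.mpr ⟨((m - x.1).toNat, (n - x.2).toNat), ?_, ?_⟩
        · rw [mem_cornerTriangle]
          omega
        · ext <;> simp only [corner] <;> omega
    _ ≤ _ := card_image_le

lemma card_filter_add_lt_neg_le_card_filter_lt_add :
    #{x ∈ Icc (-(m : ℤ)) m ×ˢ Icc (-(n : ℤ)) n | x.1 + x.2 < -(p : ℤ)}
      ≤ #{x ∈ Icc (-(m : ℤ)) m ×ˢ Icc (-(n : ℤ)) n | (p : ℤ) < x.1 + x.2} := by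
  refine card_le_card_of_injOn (fun x => -x) (fun x hx => ?_) neg_injective.injOn
  simp only [coe_filter, mem_product, mem_Icc, Set.mem_ofPred_eq] at hx ⊢
  simp only [Prod.fst_neg, Prod.snd_neg]
  omega

lemma card_filter_lt_abs_add_le :
    #{x ∈ Icc (-(m : ℤ)) m ×ˢ Icc (-(n : ℤ)) n | ¬ |x.1 + x.2| ≤ (p : ℤ)}
      ≤ (m + n - p) * (m + n - p + 1) := by
  have hupper := card_filter_lt_add_le_card_cornerTriangle m n p
  have hlower := card_filter_add_lt_neg_le_card_filter_lt_add m n p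
  set box := Icc (-(m : ℤ)) m ×ˢ Icc (-(n : ℤ)) n
  calc _ ≤ #({x ∈ box | (p : ℤ) < x.1 + x.2} ∪ {x ∈ box | x.1 + x.2 < -(p : ℤ)}) := by
        refine card_le_card fun x hx => ?_
        simp only [mem_filter, mem_union, not_le, lt_abs] at hx ⊢
        obtain ⟨hx, hgt | hlt⟩ := hx
        · exact Or.inl ⟨hx, hgt⟩
        · exact Or.inr ⟨hx, by omega⟩
    _ ≤ #{x ∈ box | (p : ℤ) < x.1 + x.2} + #{x ∈ box | x.1 + x.2 < -(p : ℤ)} :=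
        card_union_le _ _
    _ ≤ 2 * #(cornerTriangle (m + n - p)) := by omega
    _ = _ := two_mul_card_cornerTriangle _

end Box

/-- At least a `3/4` fraction of the pairs `(i,j) ∈ [-m,m] × [-n,n]` satisfy
`|i + j| ≤ p`, provided `p ≥ m` and `p ≥ n`. -/
theorem strassen_surviving_pairs (m n p : ℕ) (hm : m ≤ p) (hn : n ≤ p) :
    3 * (2 * m + 1) * (2 * n + 1) ≤
      4 * (((Finset.Icc (-(m : ℤ)) m) ×ˢ (Finset.Icc (-(n : ℤ)) n)).filter
        (fun ij => |ij.1 + ij.2| ≤ (p : ℤ))).card := by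
  have hsplit := card_filter_add_card_filter_not
    (s := Icc (-(m : ℤ)) m ×ˢ Icc (-(n : ℤ)) n) (p := fun x => |x.1 + x.2| ≤ (p : ℤ))
  have hbox : #(Icc (-(m : ℤ)) m ×ˢ Icc (-(n : ℤ)) n) = (2 * m + 1) * (2 * n + 1) := by
    rw [card_product, Int.card_Icc, Int.card_Icc]
    congr 1 <;> omega
  have hlost := card_filter_lt_abs_add_le m n p
  have hsm : m + n - p ≤ m := by omega
  have hsn : m + n - p ≤ n := by omega
  nlinarith [Nat.mul_le_mul hsm hsn]
end

section
/- Let G be a finite group, and model the support of the group tensor T_G as the set {(a, b, ab) : a, b ∈ G} ⊆ G³. Suppose A, B, C ⊆ G are subsets such that D = {(a,b,ab) : a ∈ A, b ∈ B, ab ∈ C} has the property that any two distinct elements of D differ in all three coordinates. Then D is a tri-colored sum-free set in G, i.e., for all (a₁,b₁,c₁), (a₂,b₂,c₂), (a₃,b₃,c₃) ∈ D with a₁b₂ = c₃, the three triples are equal. -/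
/-! The triple `(a₁, b₂, c₃)` satisfies `a₁ b₂ = c₃`, so it survives the zeroing out. It shares
its first coordinate with the first triple, its second with the second and its third with the
third, so independence forces it to equal all three. -/

def CoordwiseDistinct {α β γ : Type*} (D : Set (α × β × γ)) : Prop :=
  ∀ s ∈ D, ∀ t ∈ D, s ≠ t → s.1 ≠ t.1 ∧ s.2.1 ≠ t.2.1 ∧ s.2.2 ≠ t.2.2

namespace CoordwiseDistinct

variable {α β γ : Type*} {D : Set (α × β × γ)} {s t : α × β × γ}

theorem eq_of_fst_eq (hD : CoordwiseDistinct D) (hs : s ∈ D) (ht : t ∈ D)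
    (h : s.1 = t.1) : s = t :=
  by_contra fun hne => (hD s hs t ht hne).1 h

theorem eq_of_snd_fst_eq (hD : CoordwiseDistinct D) (hs : s ∈ D) (ht : t ∈ D)
    (h : s.2.1 = t.2.1) : s = t :=
  by_contra fun hne => (hD s hs t ht hne).2.1 h

theorem eq_of_snd_snd_eq (hD : CoordwiseDistinct D) (hs : s ∈ D) (ht : t ∈ D)
    (h : s.2.2 = t.2.2) : s = t :=
  by_contra fun hne => (hD s hs t ht hne).2.2 h

end CoordwiseDistinct

theorem zeroing_out_gives_tricolored_general (G : Type*) [Group G]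
    (A B C : Set G)
    (D : Set (G × G × G))
    (hD : D = {t : G × G × G | t.1 ∈ A ∧ t.2.1 ∈ B ∧ t.2.2 ∈ C ∧ t.1 * t.2.1 = t.2.2})
    (hind : ∀ s ∈ D, ∀ t ∈ D, s ≠ t → s.1 ≠ t.1 ∧ s.2.1 ≠ t.2.1 ∧ s.2.2 ≠ t.2.2) :
    ∀ t₁ ∈ D, ∀ t₂ ∈ D, ∀ t₃ ∈ D,
      t₁.1 * t₂.2.1 = t₃.2.2 → t₁ = t₂ ∧ t₂ = t₃ := by
  intro t₁ h₁ t₂ h₂ t₃ h₃ hmul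
  have hs : (t₁.1, t₂.2.1, t₃.2.2) ∈ D := by
    rw [hD] at h₁ h₂ h₃ ⊢
    exact ⟨h₁.1, h₂.2.1, h₃.2.2.1, hmul⟩
  have e₁ := CoordwiseDistinct.eq_of_fst_eq hind hs h₁ rfl
  have e₂ := CoordwiseDistinct.eq_of_snd_fst_eq hind hs h₂ rfl
  have e₃ := CoordwiseDistinct.eq_of_snd_snd_eq hind hs h₃ rfl
  exact ⟨e₁.symm.trans e₂, e₂.symm.trans e₃⟩

/-- A zeroing out of the group tensor `T_G` into an independent tensor yields a
tri-colored sum-free set in `G`. -/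
theorem zeroing_out_gives_tricolored (G : Type*) [Group G] [Fintype G]
    (A B C : Set G)
    (D : Set (G × G × G))
    (hD : D = {t : G × G × G | t.1 ∈ A ∧ t.2.1 ∈ B ∧ t.2.2 ∈ C ∧ t.1 * t.2.1 = t.2.2})
    (hind : ∀ s ∈ D, ∀ t ∈ D, s ≠ t → s.1 ≠ t.1 ∧ s.2.1 ≠ t.2.1 ∧ s.2.2 ≠ t.2.2) :
    ∀ t₁ ∈ D, ∀ t₂ ∈ D, ∀ t₃ ∈ D,
      t₁.1 * t₂.2.1 = t₃.2.2 → t₁ = t₂ ∧ t₂ = t₃ :=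
  zeroing_out_gives_tricolored_general G A B C D hD hind
end

section
/- Let G be a finite abelian group with identity 1, and let q ≥ 1 be an integer. Suppose there exist injections a, b, c : {0,1,…,q+1} → G with a(0) = b(0) = c(0) = 1 such that: a(i)·b(0) = c(i) and a(0)·b(i) = c(i) for all i ∈ {1,…,q+1}, and a(i)·b(i) = c(q+1) for all i ∈ {1,…,q}. Then |G| ≥ 2q. -/
open Finset

/-- Translating by the inverse of one square root of `g` maps the square roots of `g` onto
square roots of `1`, which are disjoint from them when `g ≠ 1`. -/
theorem two_mul_card_sq_eq_le_card {G : Type*} [CommGroup G] [Fintype G] [DecidableEq G]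
    {g : G} (hg : g ≠ 1) : 2 * #{x : G | x ^ 2 = g} ≤ Fintype.card G := by
  set roots : Finset G := {x : G | x ^ 2 = g}
  rcases roots.eq_empty_or_nonempty with hempty | ⟨x₀, hx₀⟩
  · simp [hempty]
  have hdisj : Disjoint roots (roots.map (mulRightEmbedding x₀⁻¹)) := by
    simp only [disjoint_left, mem_map, mem_filter, mem_univ, true_and, roots] at hx₀ ⊢
    rintro _ hx ⟨y, hy, rfl⟩
    apply hg
    rw [← hx, mulRightEmbedding_apply, mul_pow, hy, inv_pow, hx₀, mul_inv_cancel]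
  calc 2 * #roots = #(roots ∪ roots.map (mulRightEmbedding x₀⁻¹)) := by
        rw [card_union_of_disjoint hdisj, card_map, two_mul]
    _ ≤ Fintype.card G := card_le_univ _

theorem cw_not_subtensor_of_small_abelian_general (G : Type*) [CommGroup G] [Fintype G]
    (q : ℕ)
    (a b c : Fin (q + 2) → G)
    (ha : Function.Injective a)
    (hc : Function.Injective c)
    (ha0 : a 0 = 1) (hb0 : b 0 = 1) (hc0 : c 0 = 1)
    (h1 : ∀ i : Fin (q + 2), i ≠ 0 → a i * b 0 = c i)
    (h2 : ∀ i : Fin (q + 2), i ≠ 0 → a 0 * b i = c i)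
    (h3 : ∀ i : Fin (q + 2), i ≠ 0 → i ≠ Fin.last (q + 1) →
      a i * b i = c (Fin.last (q + 1))) :
    2 * q ≤ Fintype.card G := by
  classical
  set g := c (Fin.last (q + 1))
  have hg : g ≠ 1 := fun h => Fin.last_pos.ne' (hc (h.trans hc0.symm))
  -- `i.castSucc.succ` runs over the middle indices `1, …, q` of `Fin (q + 2)`.
  have hsq (i : Fin q) : a i.castSucc.succ ^ 2 = g := by
    have hab : a i.castSucc.succ = b i.castSucc.succ := by
      rw [← mul_one (a _), ← hb0, h1 _ (Fin.succ_ne_zero _), ← h2 _ (Fin.succ_ne_zero _), ha0,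
        one_mul]
    rw [sq]
    nth_rw 2 [hab]
    exact h3 _ (Fin.succ_ne_zero _) ((Fin.succ_ne_last_iff _).2 i.castSucc_ne_last)
  have hcard : q ≤ #{x : G | x ^ 2 = g} := by
    simpa using card_le_card_of_injOn (fun i : Fin q => a i.castSucc.succ) (s := univ)
      (fun i _ => by simp [hsq i]) (fun i _ j _ h => by simpa using ha h)
  exact (Nat.mul_le_mul_left 2 hcard).trans (two_mul_card_sq_eq_le_card hg)

/-- If the Coppersmith–Winograd tensor `CW_q` embeds as a sub-tensor of the group
tensor of a finite abelian group `G` (encoded by the injections `a, b, c`), then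
`|G| ≥ 2q`. -/
theorem cw_not_subtensor_of_small_abelian (G : Type*) [CommGroup G] [Fintype G]
    (q : ℕ) (hq : 1 ≤ q)
    (a b c : Fin (q + 2) → G)
    (ha : Function.Injective a) (hb : Function.Injective b)
    (hc : Function.Injective c)
    (ha0 : a 0 = 1) (hb0 : b 0 = 1) (hc0 : c 0 = 1)
    (h1 : ∀ i : Fin (q + 2), i ≠ 0 → a i * b 0 = c i)
    (h2 : ∀ i : Fin (q + 2), i ≠ 0 → a 0 * b i = c i)
    (h3 : ∀ i : Fin (q + 2), i ≠ 0 → i ≠ Fin.last (q + 1) →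
      a i * b i = c (Fin.last (q + 1))) :
    2 * q ≤ Fintype.card G :=
  cw_not_subtensor_of_small_abelian_general G q a b c ha hc ha0 hb0 hc0 h1 h2 h3
end

section
/- Let q ≥ 2 and let f : {0,…,q−1}² → {0,…,q−1} be any function. Let p be a probability distribution on the set of triples {(i, j, f(i,j)) : i + j ≤ q − 1} such that, writing p(xᵢ) = Σ_{j : i+j ≤ q−1} p(i,j,f(i,j)), p(yⱼ) = Σ_{i : i+j ≤ q−1} p(i,j,f(i,j)), and p(z_k) = Σ_{(i,j) : i+j ≤ q−1, f(i,j)=k} p(i,j,f(i,j)), we have p(xᵢ) ≥ 1/q − κ, p(yⱼ) ≥ 1/q − κ, and p(z_k) ≥ 1/q − κ for all i, j, k ∈ {0,…,q−1}. Then for every j ∈ {0,…,q−1}, the diagonal term satisfies p(q−1−j, j, f(q−1−j, j)) ≥ 1/q − (2j+1)·q·κ. -/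
/-!
Let `r = q - 1 - j`, so `(r, j)` is the diagonal cell of column `j`. Row `r` is supported on the
columns `≤ j`, so it suffices to bound the mass `M` of row `r` in the columns `< j`. The rows below
`r` lie entirely in the columns `< j`, so those columns carry at least `M + j (1/q - κ)`, while the
columns `≥ j` carry at least `(q - j) (1/q - κ)`. The total mass being `1` gives `M ≤ q κ`, and
`M = 0` when `j = 0`.
-/

open Finset

def IsLowerTriangular {q : ℕ} {M : Type*} [Zero M] (p : Fin q → Fin q → M) : Prop :=
  ∀ i j : Fin q, q ≤ (i : ℕ) + j → p i j = 0

theorem Fin.sum_Iio_add_sum_Ici {n : ℕ} {M : Type*} [AddCommMonoid M] (f : Fin n → M)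
    (a : Fin n) : ∑ x ∈ Iio a, f x + ∑ x ∈ Ici a, f x = ∑ x, f x := by
  rw [← sum_filter_add_sum_filter_not univ (· < a)]
  simp only [filter_gt_eq_Iio, not_lt, filter_le_eq_Ici]

theorem nonneg_of_sum_eq_one_of_forall_ge {ι : Type*} [Fintype ι] [Nonempty ι] {a : ι → ℝ}
    {κ : ℝ} (hsum : ∑ i, a i = 1) (ha : ∀ i, 1 / Fintype.card ι - κ ≤ a i) : 0 ≤ κ := by
  have hcard : (0 : ℝ) < Fintype.card ι := by exact_mod_cast Fintype.card_pos
  have := card_nsmul_le_sum univ a _ fun i _ => ha i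
  rw [hsum, card_univ, nsmul_eq_mul, mul_sub, mul_one_div_cancel hcard.ne'] at this
  nlinarith

namespace IsLowerTriangular

section AddCommMonoid

variable {q : ℕ} {M : Type*} [AddCommMonoid M] {p : Fin q → Fin q → M}

theorem sum_Iio_eq_sum (hp : IsLowerTriangular p) {i j : Fin q} (hij : q ≤ (i : ℕ) + j) :
    ∑ j' ∈ Iio j, p i j' = ∑ j', p i j' :=
  sum_subset (subset_univ _) fun j' _ hj' => hp i j' <| by
    rw [mem_Iio, not_lt, Fin.le_def] at hj'
    omega

theorem sum_eq_sum_Iio_add (hp : IsLowerTriangular p) {i j : Fin q}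
    (hij : (i : ℕ) + j + 1 = q) : ∑ j', p i j' = ∑ j' ∈ Iio j, p i j' + p i j := by
  have hIic : ∑ j' ∈ Iic j, p i j' = ∑ j', p i j' :=
    sum_subset (subset_univ _) fun j' _ hj' => hp i j' <| by
      rw [mem_Iic, not_le, Fin.lt_def] at hj'
      omega
  rw [← hIic, ← Iio_insert, sum_insert notMem_Iio_self, add_comm]

end AddCommMonoid

variable {q : ℕ} {p : Fin q → Fin q → ℝ} {κ : ℝ}

theorem sum_Iio_le_of_marginal_ge (hp : IsLowerTriangular p) (hnn : ∀ i j, 0 ≤ p i j)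
    (hsum : ∑ i, ∑ j, p i j = 1) (hx : ∀ i : Fin q, 1 / q - κ ≤ ∑ j, p i j)
    (hy : ∀ j : Fin q, 1 / q - κ ≤ ∑ i, p i j) {r j : Fin q} (hrj : (r : ℕ) + j + 1 = q) :
    ∑ j' ∈ Iio j, p r j' ≤ q * κ := by
  have hcols : ((q - j : ℕ) : ℝ) * (1 / q - κ) ≤ ∑ j' ∈ Ici j, ∑ i, p i j' := by
    simpa [Fin.card_Ici] using card_nsmul_le_sum (Ici j) _ _ fun j' _ => hy j'
  have hrows : (j : ℝ) * (1 / q - κ) ≤ ∑ i ∈ Ioi r, ∑ j' ∈ Iio j, p i j' := by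
    have hcard : #(Ioi r) = (j : ℕ) := by rw [Fin.card_Ioi]; omega
    have := card_nsmul_le_sum (Ioi r) _ _ fun i hi => (hx i).trans_eq
      (hp.sum_Iio_eq_sum (j := j) (by rw [mem_Ioi, Fin.lt_def] at hi; omega)).symm
    rwa [hcard, nsmul_eq_mul] at this
  have hleft : ∑ j' ∈ Iio j, p r j' + ∑ i ∈ Ioi r, ∑ j' ∈ Iio j, p i j'
      ≤ ∑ j' ∈ Iio j, ∑ i, p i j' := by
    rw [sum_comm (s := Iio j), ← sum_insert (f := fun i => ∑ j' ∈ Iio j, p i j') notMem_Ioi_self]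
    exact sum_le_sum_of_subset_of_nonneg (subset_univ _)
      fun i _ _ => sum_nonneg fun j' _ => hnn i j'
  have htotal : ∑ j' ∈ Iio j, ∑ i, p i j' + ∑ j' ∈ Ici j, ∑ i, p i j' = 1 := by
    rw [Fin.sum_Iio_add_sum_Ici, sum_comm, hsum]
  have hq : (q : ℝ) ≠ 0 := Nat.cast_ne_zero.2 (by omega)
  have hmarg : ((q - j : ℕ) : ℝ) * (1 / q - κ) + (j : ℝ) * (1 / q - κ) = 1 - q * κ := by
    rw [Nat.cast_sub j.isLt.le]
    field_simp
    ring
  linarith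

end IsLowerTriangular

theorem lower_triangular_diagonal_mass (q : ℕ) (κ : ℝ)
    (p : Fin q → Fin q → ℝ)
    (hnn : ∀ i j, 0 ≤ p i j)
    (hsupp : ∀ i j : Fin q, q ≤ (i : ℕ) + (j : ℕ) → p i j = 0)
    (hsum : ∑ i, ∑ j, p i j = 1)
    (hx : ∀ i : Fin q, 1 / q - κ ≤ ∑ j, p i j)
    (hy : ∀ j : Fin q, 1 / q - κ ≤ ∑ i, p i j) :
    ∀ j : Fin q, 1 / q - (2 * (j : ℕ) + 1) * q * κ
      ≤ p ⟨q - 1 - (j : ℕ), by omega⟩ j := by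
  intro j
  have hp : IsLowerTriangular p := hsupp
  have hrj : (q - 1 - (j : ℕ)) + j + 1 = q := by omega
  have : Nonempty (Fin q) := ⟨j⟩
  have hκ : 0 ≤ κ := nonneg_of_sum_eq_one_of_forall_ge hsum (by simpa using hx)
  have hrow := (hx _).trans_eq (hp.sum_eq_sum_Iio_add (i := ⟨q - 1 - j, by omega⟩) hrj)
  have hoff := hp.sum_Iio_le_of_marginal_ge hnn hsum hx hy (r := ⟨q - 1 - j, by omega⟩) hrj
  have hq : (1 : ℝ) ≤ q := by exact_mod_cast j.pos
  rcases Nat.eq_zero_or_pos j with hj | hj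
  · have hoff0 : ∑ j' ∈ Iio j, p ⟨q - 1 - j, by omega⟩ j' = 0 :=
      sum_eq_zero fun j' hj' => by rw [mem_Iio, Fin.lt_def] at hj'; omega
    have hj : ((j : ℕ) : ℝ) = 0 := by exact_mod_cast hj
    rw [hj]
    nlinarith
  · have hjq : 1 ≤ 2 * (j : ℝ) * q := by
      have : (1 : ℝ) ≤ j := by exact_mod_cast hj
      nlinarith
    nlinarith [mul_nonneg (sub_nonneg.2 hjq) hκ]
end
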